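/- Fix real parameters μ₁, μ₂, μ₃, μ₄ and ε ∈ ℝ. Define first-order operators on smooth functions φ : ℝ⁴ → ℂ by: ξ₁^ε φ = cos x₃ ∂₁φ − sin x₃ ∂₂φ − iε(μ₁x₂ cos x₃ + μ₃ sin x₃ + μ₄ cos x₃)φ; ξ₂^ε φ = sin x₃ ∂₁φ + cos x₃ ∂₂φ − iε(μ₁x₂ sin x₃ − μ₃ cos x₃ + μ₄ sin x₃)φ; ξ₃^ε φ = ∂₃φ − iεμ₂x₄φ; ξ₄^ε φ = ∂₄φ; and η₁^ε φ = ∂₁φ; η₂^ε φ = ∂₂φ − iεμ₁x₁φ; η₃^ε φ = x₂∂₁φ − x₁∂₂φ + ∂₃φ − iε(μ₃x₁ + μ₄x₂ + (μ₁/2)(x₂² − x₁²))φ; η₄^ε φ = ∂₄φ − iεμ₂x₃φ. Then for all a, b ∈ {1,2,3,4} and every smooth φ : ℝ⁴ → ℂ, [ξₐ^ε, η_b^ε]φ = 0, where [A,B]φ = A(Bφ) − B(Aφ). (Consequently every operator ξₐ^ε commutes with the Klein–Gordon–Fock operator Ĥ^ε = 𝐆^{ab}(η_a^ε + C_a)η_b^ε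 built from any right-invariant metric 𝐆 on E(2) × ℝ.) -/

import Mathlib

noncomputable section

/-- The partial derivative `∂ₖ φ (x)` of a complex-valued function on `ℝ⁴`. -/
def pd (k : Fin 4) (φ : (Fin 4 → ℝ) → ℂ) (x : Fin 4 → ℝ) : ℂ :=
  fderiv ℝ φ x (Pi.single k 1)

/-- The symmetry operators `ξₐ^ε` of the Klein–Gordon–Fock equation in the external
right-invariant electromagnetic field with 2-cocycle parameters `μ₁, μ₂, μ₃, μ₄` on
`E(2) × ℝ` (indexed from `0`). -/
def xiop (μ₁ μ₂ μ₃ μ₄ ε : ℝ) : Fin 4 → ((Fin 4 → ℝ) → ℂ) → ((Fin 4 → ℝ) → ℂ) :=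
  ![fun φ x => Real.cos (x 2) * pd 0 φ x - Real.sin (x 2) * pd 1 φ x
      - Complex.I * ε * (μ₁ * x 1 * Real.cos (x 2) + μ₃ * Real.sin (x 2)
          + μ₄ * Real.cos (x 2)) * φ x,
    fun φ x => Real.sin (x 2) * pd 0 φ x + Real.cos (x 2) * pd 1 φ x
      - Complex.I * ε * (μ₁ * x 1 * Real.sin (x 2) - μ₃ * Real.cos (x 2)
          + μ₄ * Real.sin (x 2)) * φ x,
    fun φ x => pd 2 φ x - Complex.I * ε * (μ₂ * x 3) * φ x,
    fun φ x => pd 3 φ x]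

/-- The charge-shifted right-invariant operators `ηₐ^ε = ηₐ − iε𝐀ₐ` on `E(2) × ℝ`
(indexed from `0`). -/
def etaop (μ₁ μ₂ μ₃ μ₄ ε : ℝ) : Fin 4 → ((Fin 4 → ℝ) → ℂ) → ((Fin 4 → ℝ) → ℂ) :=
  ![fun φ x => pd 0 φ x,
    fun φ x => pd 1 φ x - Complex.I * ε * (μ₁ * x 0) * φ x,
    fun φ x => x 1 * pd 0 φ x - x 0 * pd 1 φ x + pd 2 φ x
      - Complex.I * ε * (μ₃ * x 0 + μ₄ * x 1 + μ₁ / 2 * ((x 1) ^ 2 - (x 0) ^ 2)) * φ x,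
    fun φ x => pd 3 φ x - Complex.I * ε * (μ₂ * x 2) * φ x]

@[fun_prop] theorem Complex.differentiable_ofReal' : Differentiable ℝ Complex.ofReal :=
  Complex.ofRealCLM.differentiable

@[fun_prop] theorem Complex.contDiff_ofReal' {n : WithTop ℕ∞} : ContDiff ℝ n Complex.ofReal :=
  Complex.ofRealCLM.contDiff

@[fun_prop] theorem Real.contDiff_cos' {n : WithTop ℕ∞} : ContDiff ℝ n Real.cos :=
  Real.contDiff_cos

@[fun_prop] theorem Real.contDiff_sin' {n : WithTop ℕ∞} : ContDiff ℝ n Real.sin :=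
  Real.contDiff_sin

@[fun_prop] theorem Real.differentiable_cos' : Differentiable ℝ Real.cos :=
  Real.differentiable_cos

@[fun_prop] theorem Real.differentiable_sin' : Differentiable ℝ Real.sin :=
  Real.differentiable_sin

variable {φ f g : (Fin 4 → ℝ) → ℂ} {x : Fin 4 → ℝ} {k l j : Fin 4}

theorem contDiff_pd (hφ : ContDiff ℝ (⊤ : ℕ∞) φ) (l : Fin 4) : ContDiff ℝ (⊤ : ℕ∞) (pd l φ) := by
  have h := hφ.fderiv_right (m := (⊤ : ℕ∞)) le_rfl
  exact (ContinuousLinearMap.apply ℝ ℂ (Pi.single l 1)).contDiff.comp h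

theorem pd_comm (hφ : ContDiff ℝ (⊤ : ℕ∞) φ) (k l : Fin 4) (x : Fin 4 → ℝ) :
    pd k (pd l φ) x = pd l (pd k φ) x := by
  have hd : Differentiable ℝ (fderiv ℝ φ) :=
    (hφ.fderiv_right (m := (⊤ : ℕ∞)) le_rfl).differentiable (by simp)
  have h1 : ∀ y, HasFDerivAt φ (fderiv ℝ φ y) y :=
    fun y => (hφ.differentiable (by simp) y).hasFDerivAt
  have h2 : HasFDerivAt (fderiv ℝ φ) (fderiv ℝ (fderiv ℝ φ) x) x := (hd x).hasFDerivAt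
  have hsym := second_derivative_symmetric h1 h2
  have key : ∀ a b : Fin 4, pd a (pd b φ) x
      = fderiv ℝ (fderiv ℝ φ) x (Pi.single a 1) (Pi.single b 1) := by
    intro a b
    rw [show pd a (pd b φ) x = fderiv ℝ (fun y => (fderiv ℝ φ y) (Pi.single b (1:ℝ))) x
        (Pi.single a 1) from rfl,
      fderiv_clm_apply (hd x) (differentiableAt_const _)]
    simp
  rw [key, key, hsym]

theorem pd_add (hf : DifferentiableAt ℝ f x) (hg : DifferentiableAt ℝ g x) :
    pd k (fun y => f y + g y) x = pd k f x + pd k g x := by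
  unfold pd; rw [fderiv_fun_add hf hg]; rfl

theorem pd_sub (hf : DifferentiableAt ℝ f x) (hg : DifferentiableAt ℝ g x) :
    pd k (fun y => f y - g y) x = pd k f x - pd k g x := by
  unfold pd; rw [fderiv_fun_sub hf hg]; rfl

theorem pd_mul (hf : DifferentiableAt ℝ f x) (hg : DifferentiableAt ℝ g x) :
    pd k (fun y => f y * g y) x = pd k f x * g x + f x * pd k g x := by
  unfold pd; rw [fderiv_fun_mul hf hg]
  simp [smul_eq_mul]; ring

theorem pd_const (c : ℂ) : pd k (fun _ => c) x = 0 := by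
  unfold pd; rw [fderiv_fun_const]; rfl

theorem pd_neg (hf : DifferentiableAt ℝ f x) : pd k (fun y => -(f y)) x = -pd k f x := by
  unfold pd; rw [fderiv_fun_neg]; rfl

theorem pd_coord : pd k (fun y => ((y j : ℝ) : ℂ)) x = if j = k then 1 else 0 := by
  unfold pd
  rw [show (fun y : Fin 4 → ℝ => ((y j : ℝ) : ℂ))
      = ⇑(Complex.ofRealCLM.comp (ContinuousLinearMap.proj (R := ℝ)
        (φ := fun _ : Fin 4 => ℝ) j)) from rfl,
    ContinuousLinearMap.fderiv]
  simp [Pi.single_apply]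
  split <;> simp

theorem pd_real_comp {u : ℝ → ℝ} (hf : DifferentiableAt ℝ u (x j)) :
    pd k (fun y => ((u (y j) : ℝ) : ℂ)) x = if j = k then ((deriv u (x j) : ℝ) : ℂ) else 0 := by
  have hproj : HasFDerivAt (fun y : Fin 4 → ℝ => y j)
      (ContinuousLinearMap.proj (R := ℝ) (φ := fun _ : Fin 4 => ℝ) j) x :=
    by exact (ContinuousLinearMap.proj (R := ℝ) (φ := fun _ : Fin 4 => ℝ) j).hasFDerivAt
  have h1 : HasFDerivAt (fun y : Fin 4 → ℝ => u (y j))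
      (deriv u (x j) • ContinuousLinearMap.proj (R := ℝ) (φ := fun _ : Fin 4 => ℝ) j) x :=
    hf.hasDerivAt.comp_hasFDerivAt x hproj
  have h2 : HasFDerivAt (fun y : Fin 4 → ℝ => ((u (y j) : ℝ) : ℂ))
      (Complex.ofRealCLM.comp
        (deriv u (x j) • ContinuousLinearMap.proj (R := ℝ) (φ := fun _ : Fin 4 => ℝ) j)) x :=
    Complex.ofRealCLM.hasFDerivAt.comp x h1
  unfold pd
  rw [h2.fderiv]
  simp [Pi.single_apply]
  split <;> simp

theorem pd_cos : pd k (fun y => ((Real.cos (y 2) : ℝ) : ℂ)) x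
    = if (2 : Fin 4) = k then (-Real.sin (x 2) : ℂ) else 0 := by
  rw [pd_real_comp (Real.differentiableAt_cos)]
  simp [Real.deriv_cos]

theorem pd_sin : pd k (fun y => ((Real.sin (y 2) : ℝ) : ℂ)) x
    = if (2 : Fin 4) = k then (Real.cos (x 2) : ℂ) else 0 := by
  rw [pd_real_comp (Real.differentiableAt_sin)]
  simp


def op (c0 c1 c2 c3 d φ : (Fin 4 → ℝ) → ℂ) (x : Fin 4 → ℝ) : ℂ :=
  c0 x * pd 0 φ x + c1 x * pd 1 φ x + c2 x * pd 2 φ x + c3 x * pd 3 φ x + d x * φ x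

variable {c0 c1 c2 c3 d e0 e1 e2 e3 d' : (Fin 4 → ℝ) → ℂ}

theorem pd_op (hc0 : ContDiff ℝ (⊤ : ℕ∞) c0) (hc1 : ContDiff ℝ (⊤ : ℕ∞) c1) (hc2 : ContDiff ℝ (⊤ : ℕ∞) c2)
    (hc3 : ContDiff ℝ (⊤ : ℕ∞) c3) (hd : ContDiff ℝ (⊤ : ℕ∞) d) (hφ : ContDiff ℝ (⊤ : ℕ∞) φ) :
    pd k (op c0 c1 c2 c3 d φ) x =
      pd k c0 x * pd 0 φ x + c0 x * pd k (pd 0 φ) x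
      + (pd k c1 x * pd 1 φ x + c1 x * pd k (pd 1 φ) x)
      + (pd k c2 x * pd 2 φ x + c2 x * pd k (pd 2 φ) x)
      + (pd k c3 x * pd 3 φ x + c3 x * pd k (pd 3 φ) x)
      + (pd k d x * φ x + d x * pd k φ x) := by
  have D : ∀ l, DifferentiableAt ℝ (pd l φ) x :=
    fun l => ((contDiff_pd hφ l).differentiable (by simp) x)
  have Dφ : DifferentiableAt ℝ φ x := hφ.differentiable (by simp) x
  have m0 : DifferentiableAt ℝ (fun y => c0 y * pd 0 φ y) x :=
    (hc0.differentiable (by simp) x).mul (D 0)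
  have m1 : DifferentiableAt ℝ (fun y => c1 y * pd 1 φ y) x :=
    (hc1.differentiable (by simp) x).mul (D 1)
  have m2 : DifferentiableAt ℝ (fun y => c2 y * pd 2 φ y) x :=
    (hc2.differentiable (by simp) x).mul (D 2)
  have m3 : DifferentiableAt ℝ (fun y => c3 y * pd 3 φ y) x :=
    (hc3.differentiable (by simp) x).mul (D 3)
  have md : DifferentiableAt ℝ (fun y => d y * φ y) x :=
    (hd.differentiable (by simp) x).mul Dφ
  unfold op
  rw [pd_add (((m0.fun_add m1).fun_add m2).fun_add m3) md, pd_add ((m0.fun_add m1).fun_add m2) m3,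
    pd_add (m0.fun_add m1) m2, pd_add m0 m1,
    pd_mul (hc0.differentiable (by simp) x) (D 0), pd_mul (hc1.differentiable (by simp) x) (D 1),
    pd_mul (hc2.differentiable (by simp) x) (D 2), pd_mul (hc3.differentiable (by simp) x) (D 3),
    pd_mul (hd.differentiable (by simp) x) Dφ]

theorem comm_op (hc0 : ContDiff ℝ (⊤ : ℕ∞) c0) (hc1 : ContDiff ℝ (⊤ : ℕ∞) c1) (hc2 : ContDiff ℝ (⊤ : ℕ∞) c2)
    (hc3 : ContDiff ℝ (⊤ : ℕ∞) c3) (hd : ContDiff ℝ (⊤ : ℕ∞) d)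
    (he0 : ContDiff ℝ (⊤ : ℕ∞) e0) (he1 : ContDiff ℝ (⊤ : ℕ∞) e1) (he2 : ContDiff ℝ (⊤ : ℕ∞) e2)
    (he3 : ContDiff ℝ (⊤ : ℕ∞) e3) (hd' : ContDiff ℝ (⊤ : ℕ∞) d') (hφ : ContDiff ℝ (⊤ : ℕ∞) φ) :
    op c0 c1 c2 c3 d (op e0 e1 e2 e3 d' φ) x - op e0 e1 e2 e3 d' (op c0 c1 c2 c3 d φ) x =
      (c0 x * pd 0 e0 x + c1 x * pd 1 e0 x + c2 x * pd 2 e0 x + c3 x * pd 3 e0 x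
        - (e0 x * pd 0 c0 x + e1 x * pd 1 c0 x + e2 x * pd 2 c0 x + e3 x * pd 3 c0 x))
          * pd 0 φ x
      + (c0 x * pd 0 e1 x + c1 x * pd 1 e1 x + c2 x * pd 2 e1 x + c3 x * pd 3 e1 x
        - (e0 x * pd 0 c1 x + e1 x * pd 1 c1 x + e2 x * pd 2 c1 x + e3 x * pd 3 c1 x))
          * pd 1 φ x
      + (c0 x * pd 0 e2 x + c1 x * pd 1 e2 x + c2 x * pd 2 e2 x + c3 x * pd 3 e2 x
        - (e0 x * pd 0 c2 x + e1 x * pd 1 c2 x + e2 x * pd 2 c2 x + e3 x * pd 3 c2 x))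
          * pd 2 φ x
      + (c0 x * pd 0 e3 x + c1 x * pd 1 e3 x + c2 x * pd 2 e3 x + c3 x * pd 3 e3 x
        - (e0 x * pd 0 c3 x + e1 x * pd 1 c3 x + e2 x * pd 2 c3 x + e3 x * pd 3 c3 x))
          * pd 3 φ x
      + (c0 x * pd 0 d' x + c1 x * pd 1 d' x + c2 x * pd 2 d' x + c3 x * pd 3 d' x
        - (e0 x * pd 0 d x + e1 x * pd 1 d x + e2 x * pd 2 d x + e3 x * pd 3 d x))
          * φ x := by
  have hψ : ContDiff ℝ (⊤ : ℕ∞) (op e0 e1 e2 e3 d' φ) := by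
    unfold op
    exact ((((he0.mul (contDiff_pd hφ 0)).add (he1.mul (contDiff_pd hφ 1))).add
      (he2.mul (contDiff_pd hφ 2))).add (he3.mul (contDiff_pd hφ 3))).add (hd'.mul hφ)
  have hχ : ContDiff ℝ (⊤ : ℕ∞) (op c0 c1 c2 c3 d φ) := by
    unfold op
    exact ((((hc0.mul (contDiff_pd hφ 0)).add (hc1.mul (contDiff_pd hφ 1))).add
      (hc2.mul (contDiff_pd hφ 2))).add (hc3.mul (contDiff_pd hφ 3))).add (hd.mul hφ)
  rw [show op c0 c1 c2 c3 d (op e0 e1 e2 e3 d' φ) x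
      = c0 x * pd 0 (op e0 e1 e2 e3 d' φ) x + c1 x * pd 1 (op e0 e1 e2 e3 d' φ) x
        + c2 x * pd 2 (op e0 e1 e2 e3 d' φ) x + c3 x * pd 3 (op e0 e1 e2 e3 d' φ) x
        + d x * (op e0 e1 e2 e3 d' φ) x from rfl,
    show op e0 e1 e2 e3 d' (op c0 c1 c2 c3 d φ) x
      = e0 x * pd 0 (op c0 c1 c2 c3 d φ) x + e1 x * pd 1 (op c0 c1 c2 c3 d φ) x
        + e2 x * pd 2 (op c0 c1 c2 c3 d φ) x + e3 x * pd 3 (op c0 c1 c2 c3 d φ) x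
        + d' x * (op c0 c1 c2 c3 d φ) x from rfl]
  rw [pd_op he0 he1 he2 he3 hd' hφ, pd_op he0 he1 he2 he3 hd' hφ,
    pd_op he0 he1 he2 he3 hd' hφ, pd_op he0 he1 he2 he3 hd' hφ,
    pd_op hc0 hc1 hc2 hc3 hd hφ, pd_op hc0 hc1 hc2 hc3 hd hφ,
    pd_op hc0 hc1 hc2 hc3 hd hφ, pd_op hc0 hc1 hc2 hc3 hd hφ]
  unfold op
  rw [pd_comm hφ 1 0, pd_comm hφ 2 0, pd_comm hφ 3 0, pd_comm hφ 2 1, pd_comm hφ 3 1,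
    pd_comm hφ 3 2]
  ring


section OpLemmas

variable {μ₁ μ₂ μ₃ μ₄ ε : ℝ}

theorem xi0_op : xiop μ₁ μ₂ μ₃ μ₄ ε 0 =
    op (fun y => ((Real.cos (y 2) : ℝ) : ℂ)) (fun y => -((Real.sin (y 2) : ℝ) : ℂ))
      (fun _ => 0) (fun _ => 0)
      (fun y => -(Complex.I * (ε : ℂ) * ((μ₁ : ℂ) * ((y 1 : ℝ) : ℂ) * ((Real.cos (y 2) : ℝ) : ℂ)
        + (μ₃ : ℂ) * ((Real.sin (y 2) : ℝ) : ℂ) + (μ₄ : ℂ) * ((Real.cos (y 2) : ℝ) : ℂ)))) := by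
  funext ψ y
  simp only [xiop, op, Matrix.cons_val_zero]
  push_cast
  ring

theorem xi1_op : xiop μ₁ μ₂ μ₃ μ₄ ε 1 =
    op (fun y => ((Real.sin (y 2) : ℝ) : ℂ)) (fun y => ((Real.cos (y 2) : ℝ) : ℂ))
      (fun _ => 0) (fun _ => 0)
      (fun y => -(Complex.I * (ε : ℂ) * ((μ₁ : ℂ) * ((y 1 : ℝ) : ℂ) * ((Real.sin (y 2) : ℝ) : ℂ)
        - (μ₃ : ℂ) * ((Real.cos (y 2) : ℝ) : ℂ) + (μ₄ : ℂ) * ((Real.sin (y 2) : ℝ) : ℂ)))) := by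
  funext ψ y
  simp only [xiop, op, Matrix.cons_val_one, Matrix.head_cons]
  push_cast
  ring

theorem xi2_op : xiop μ₁ μ₂ μ₃ μ₄ ε 2 =
    op (fun _ => 0) (fun _ => 0) (fun _ => 1) (fun _ => 0)
      (fun y => -(Complex.I * (ε : ℂ) * ((μ₂ : ℂ) * ((y 3 : ℝ) : ℂ)))) := by
  funext ψ y
  simp only [xiop, op]
  show pd 2 ψ y - _ = _
  push_cast
  ring

theorem xi3_op : xiop μ₁ μ₂ μ₃ μ₄ ε 3 =
    op (fun _ => 0) (fun _ => 0) (fun _ => 0) (fun _ => 1) (fun _ => 0) := by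
  funext ψ y
  simp only [xiop, op]
  show pd 3 ψ y = _
  ring

theorem eta0_op : etaop μ₁ μ₂ μ₃ μ₄ ε 0 =
    op (fun _ => 1) (fun _ => 0) (fun _ => 0) (fun _ => 0) (fun _ => 0) := by
  funext ψ y
  simp only [etaop, op, Matrix.cons_val_zero]
  ring

theorem eta1_op : etaop μ₁ μ₂ μ₃ μ₄ ε 1 =
    op (fun _ => 0) (fun _ => 1) (fun _ => 0) (fun _ => 0)
      (fun y => -(Complex.I * (ε : ℂ) * ((μ₁ : ℂ) * ((y 0 : ℝ) : ℂ)))) := by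
  funext ψ y
  simp only [etaop, op, Matrix.cons_val_one, Matrix.head_cons]
  push_cast
  ring

theorem eta2_op : etaop μ₁ μ₂ μ₃ μ₄ ε 2 =
    op (fun y => ((y 1 : ℝ) : ℂ)) (fun y => -((y 0 : ℝ) : ℂ)) (fun _ => 1) (fun _ => 0)
      (fun y => -(Complex.I * (ε : ℂ) * ((μ₃ : ℂ) * ((y 0 : ℝ) : ℂ) + (μ₄ : ℂ) * ((y 1 : ℝ) : ℂ)
        + (μ₁ : ℂ) / 2 * (((y 1 : ℝ) : ℂ) * ((y 1 : ℝ) : ℂ)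
          - ((y 0 : ℝ) : ℂ) * ((y 0 : ℝ) : ℂ))))) := by
  funext ψ y
  simp only [etaop, op]
  show ((y 1 : ℝ) : ℂ) * pd 0 ψ y - _ + _ - _ = _
  push_cast
  ring

theorem eta3_op : etaop μ₁ μ₂ μ₃ μ₄ ε 3 =
    op (fun _ => 0) (fun _ => 0) (fun _ => 0) (fun _ => 1)
      (fun y => -(Complex.I * (ε : ℂ) * ((μ₂ : ℂ) * ((y 2 : ℝ) : ℂ)))) := by
  funext ψ y
  simp only [etaop, op]
  show pd 3 ψ y - _ = _
  push_cast
  ring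

end OpLemmas

set_option maxHeartbeats 4000000 in
/-- the symmetry operators `ξₐ^ε` commute with the charge-shifted
right-invariant operators `η_b^ε`: `[ξₐ^ε, η_b^ε]φ = 0` for all `a, b` and every
smooth `φ : ℝ⁴ → ℂ`. -/
theorem symmetry_operators_commute_with_eta (μ₁ μ₂ μ₃ μ₄ ε : ℝ) :
    ∀ (a b : Fin 4) (φ : (Fin 4 → ℝ) → ℂ), ContDiff ℝ (⊤ : ℕ∞) φ →
      ∀ x : Fin 4 → ℝ,
        xiop μ₁ μ₂ μ₃ μ₄ ε a (etaop μ₁ μ₂ μ₃ μ₄ ε b φ) x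
          - etaop μ₁ μ₂ μ₃ μ₄ ε b (xiop μ₁ μ₂ μ₃ μ₄ ε a φ) x = 0 := by
  intro a b φ hφ x
  have h0 : ContDiff ℝ (⊤ : ℕ∞) (fun _ : Fin 4 → ℝ => (0 : ℂ)) := contDiff_const
  have h1 : ContDiff ℝ (⊤ : ℕ∞) (fun _ : Fin 4 → ℝ => (1 : ℂ)) := contDiff_const
  have hcos : ContDiff ℝ (⊤ : ℕ∞) (fun y : Fin 4 → ℝ => ((Real.cos (y 2) : ℝ) : ℂ)) := by fun_prop
  have hsin : ContDiff ℝ (⊤ : ℕ∞) (fun y : Fin 4 → ℝ => ((Real.sin (y 2) : ℝ) : ℂ)) := by fun_prop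
  have hnsin : ContDiff ℝ (⊤ : ℕ∞) (fun y : Fin 4 → ℝ => -((Real.sin (y 2) : ℝ) : ℂ)) := by fun_prop
  have hy1 : ContDiff ℝ (⊤ : ℕ∞) (fun y : Fin 4 → ℝ => ((y 1 : ℝ) : ℂ)) := by fun_prop
  have hny0 : ContDiff ℝ (⊤ : ℕ∞) (fun y : Fin 4 → ℝ => -((y 0 : ℝ) : ℂ)) := by fun_prop
  have hd0 : ContDiff ℝ (⊤ : ℕ∞) (fun y : Fin 4 → ℝ =>
      -(Complex.I * (ε : ℂ) * ((μ₁ : ℂ) * ((y 1 : ℝ) : ℂ) * ((Real.cos (y 2) : ℝ) : ℂ)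
        + (μ₃ : ℂ) * ((Real.sin (y 2) : ℝ) : ℂ)
        + (μ₄ : ℂ) * ((Real.cos (y 2) : ℝ) : ℂ)))) := by fun_prop
  have hd1 : ContDiff ℝ (⊤ : ℕ∞) (fun y : Fin 4 → ℝ =>
      -(Complex.I * (ε : ℂ) * ((μ₁ : ℂ) * ((y 1 : ℝ) : ℂ) * ((Real.sin (y 2) : ℝ) : ℂ)
        - (μ₃ : ℂ) * ((Real.cos (y 2) : ℝ) : ℂ)
        + (μ₄ : ℂ) * ((Real.sin (y 2) : ℝ) : ℂ)))) := by fun_prop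
  have hd2 : ContDiff ℝ (⊤ : ℕ∞) (fun y : Fin 4 → ℝ =>
      -(Complex.I * (ε : ℂ) * ((μ₂ : ℂ) * ((y 3 : ℝ) : ℂ)))) := by fun_prop
  have he1d : ContDiff ℝ (⊤ : ℕ∞) (fun y : Fin 4 → ℝ =>
      -(Complex.I * (ε : ℂ) * ((μ₁ : ℂ) * ((y 0 : ℝ) : ℂ)))) := by fun_prop
  have he2d : ContDiff ℝ (⊤ : ℕ∞) (fun y : Fin 4 → ℝ =>
      -(Complex.I * (ε : ℂ) * ((μ₃ : ℂ) * ((y 0 : ℝ) : ℂ) + (μ₄ : ℂ) * ((y 1 : ℝ) : ℂ)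
        + (μ₁ : ℂ) / 2 * (((y 1 : ℝ) : ℂ) * ((y 1 : ℝ) : ℂ)
          - ((y 0 : ℝ) : ℂ) * ((y 0 : ℝ) : ℂ))))) := by fun_prop
  have he3d : ContDiff ℝ (⊤ : ℕ∞) (fun y : Fin 4 → ℝ =>
      -(Complex.I * (ε : ℂ) * ((μ₂ : ℂ) * ((y 2 : ℝ) : ℂ)))) := by fun_prop
  fin_cases a <;> fin_cases b
  · show xiop μ₁ μ₂ μ₃ μ₄ ε 0 (etaop μ₁ μ₂ μ₃ μ₄ ε 0 φ) x
        - etaop μ₁ μ₂ μ₃ μ₄ ε 0 (xiop μ₁ μ₂ μ₃ μ₄ ε 0 φ) x = 0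
    rw [xi0_op, eta0_op, comm_op hcos hnsin h0 h0 hd0 h1 h0 h0 h0 h0 hφ]
    simp (disch := fun_prop) only [pd_neg, pd_mul, pd_add, pd_sub, pd_const, pd_coord,
      pd_cos, pd_sin, Fin.reduceEq, reduceIte]
    try ring
  · show xiop μ₁ μ₂ μ₃ μ₄ ε 0 (etaop μ₁ μ₂ μ₃ μ₄ ε 1 φ) x
        - etaop μ₁ μ₂ μ₃ μ₄ ε 1 (xiop μ₁ μ₂ μ₃ μ₄ ε 0 φ) x = 0
    rw [xi0_op, eta1_op, comm_op hcos hnsin h0 h0 hd0 h0 h1 h0 h0 he1d hφ]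
    simp (disch := fun_prop) only [pd_neg, pd_mul, pd_add, pd_sub, pd_const, pd_coord,
      pd_cos, pd_sin, Fin.reduceEq, reduceIte]
    try ring
  · show xiop μ₁ μ₂ μ₃ μ₄ ε 0 (etaop μ₁ μ₂ μ₃ μ₄ ε 2 φ) x
        - etaop μ₁ μ₂ μ₃ μ₄ ε 2 (xiop μ₁ μ₂ μ₃ μ₄ ε 0 φ) x = 0
    rw [xi0_op, eta2_op, comm_op hcos hnsin h0 h0 hd0 hy1 hny0 h1 h0 he2d hφ]
    simp (disch := fun_prop) only [pd_neg, pd_mul, pd_add, pd_sub, pd_const, pd_coord,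
      pd_cos, pd_sin, Fin.reduceEq, reduceIte]
    try ring
  · show xiop μ₁ μ₂ μ₃ μ₄ ε 0 (etaop μ₁ μ₂ μ₃ μ₄ ε 3 φ) x
        - etaop μ₁ μ₂ μ₃ μ₄ ε 3 (xiop μ₁ μ₂ μ₃ μ₄ ε 0 φ) x = 0
    rw [xi0_op, eta3_op, comm_op hcos hnsin h0 h0 hd0 h0 h0 h0 h1 he3d hφ]
    simp (disch := fun_prop) only [pd_neg, pd_mul, pd_add, pd_sub, pd_const, pd_coord,
      pd_cos, pd_sin, Fin.reduceEq, reduceIte]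
    try ring
  · show xiop μ₁ μ₂ μ₃ μ₄ ε 1 (etaop μ₁ μ₂ μ₃ μ₄ ε 0 φ) x
        - etaop μ₁ μ₂ μ₃ μ₄ ε 0 (xiop μ₁ μ₂ μ₃ μ₄ ε 1 φ) x = 0
    rw [xi1_op, eta0_op, comm_op hsin hcos h0 h0 hd1 h1 h0 h0 h0 h0 hφ]
    simp (disch := fun_prop) only [pd_neg, pd_mul, pd_add, pd_sub, pd_const, pd_coord,
      pd_cos, pd_sin, Fin.reduceEq, reduceIte]
    try ring
  · show xiop μ₁ μ₂ μ₃ μ₄ ε 1 (etaop μ₁ μ₂ μ₃ μ₄ ε 1 φ) x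
        - etaop μ₁ μ₂ μ₃ μ₄ ε 1 (xiop μ₁ μ₂ μ₃ μ₄ ε 1 φ) x = 0
    rw [xi1_op, eta1_op, comm_op hsin hcos h0 h0 hd1 h0 h1 h0 h0 he1d hφ]
    simp (disch := fun_prop) only [pd_neg, pd_mul, pd_add, pd_sub, pd_const, pd_coord,
      pd_cos, pd_sin, Fin.reduceEq, reduceIte]
    try ring
  · show xiop μ₁ μ₂ μ₃ μ₄ ε 1 (etaop μ₁ μ₂ μ₃ μ₄ ε 2 φ) x
        - etaop μ₁ μ₂ μ₃ μ₄ ε 2 (xiop μ₁ μ₂ μ₃ μ₄ ε 1 φ) x = 0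
    rw [xi1_op, eta2_op, comm_op hsin hcos h0 h0 hd1 hy1 hny0 h1 h0 he2d hφ]
    simp (disch := fun_prop) only [pd_neg, pd_mul, pd_add, pd_sub, pd_const, pd_coord,
      pd_cos, pd_sin, Fin.reduceEq, reduceIte]
    try ring
  · show xiop μ₁ μ₂ μ₃ μ₄ ε 1 (etaop μ₁ μ₂ μ₃ μ₄ ε 3 φ) x
        - etaop μ₁ μ₂ μ₃ μ₄ ε 3 (xiop μ₁ μ₂ μ₃ μ₄ ε 1 φ) x = 0
    rw [xi1_op, eta3_op, comm_op hsin hcos h0 h0 hd1 h0 h0 h0 h1 he3d hφ]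
    simp (disch := fun_prop) only [pd_neg, pd_mul, pd_add, pd_sub, pd_const, pd_coord,
      pd_cos, pd_sin, Fin.reduceEq, reduceIte]
    try ring
  · show xiop μ₁ μ₂ μ₃ μ₄ ε 2 (etaop μ₁ μ₂ μ₃ μ₄ ε 0 φ) x
        - etaop μ₁ μ₂ μ₃ μ₄ ε 0 (xiop μ₁ μ₂ μ₃ μ₄ ε 2 φ) x = 0
    rw [xi2_op, eta0_op, comm_op h0 h0 h1 h0 hd2 h1 h0 h0 h0 h0 hφ]
    simp (disch := fun_prop) only [pd_neg, pd_mul, pd_add, pd_sub, pd_const, pd_coord,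
      pd_cos, pd_sin, Fin.reduceEq, reduceIte]
    try ring
  · show xiop μ₁ μ₂ μ₃ μ₄ ε 2 (etaop μ₁ μ₂ μ₃ μ₄ ε 1 φ) x
        - etaop μ₁ μ₂ μ₃ μ₄ ε 1 (xiop μ₁ μ₂ μ₃ μ₄ ε 2 φ) x = 0
    rw [xi2_op, eta1_op, comm_op h0 h0 h1 h0 hd2 h0 h1 h0 h0 he1d hφ]
    simp (disch := fun_prop) only [pd_neg, pd_mul, pd_add, pd_sub, pd_const, pd_coord,
      pd_cos, pd_sin, Fin.reduceEq, reduceIte]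
    try ring
  · show xiop μ₁ μ₂ μ₃ μ₄ ε 2 (etaop μ₁ μ₂ μ₃ μ₄ ε 2 φ) x
        - etaop μ₁ μ₂ μ₃ μ₄ ε 2 (xiop μ₁ μ₂ μ₃ μ₄ ε 2 φ) x = 0
    rw [xi2_op, eta2_op, comm_op h0 h0 h1 h0 hd2 hy1 hny0 h1 h0 he2d hφ]
    simp (disch := fun_prop) only [pd_neg, pd_mul, pd_add, pd_sub, pd_const, pd_coord,
      pd_cos, pd_sin, Fin.reduceEq, reduceIte]
    try ring
  · show xiop μ₁ μ₂ μ₃ μ₄ ε 2 (etaop μ₁ μ₂ μ₃ μ₄ ε 3 φ) x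
        - etaop μ₁ μ₂ μ₃ μ₄ ε 3 (xiop μ₁ μ₂ μ₃ μ₄ ε 2 φ) x = 0
    rw [xi2_op, eta3_op, comm_op h0 h0 h1 h0 hd2 h0 h0 h0 h1 he3d hφ]
    simp (disch := fun_prop) only [pd_neg, pd_mul, pd_add, pd_sub, pd_const, pd_coord,
      pd_cos, pd_sin, Fin.reduceEq, reduceIte]
    try ring
  · show xiop μ₁ μ₂ μ₃ μ₄ ε 3 (etaop μ₁ μ₂ μ₃ μ₄ ε 0 φ) x
        - etaop μ₁ μ₂ μ₃ μ₄ ε 0 (xiop μ₁ μ₂ μ₃ μ₄ ε 3 φ) x = 0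
    rw [xi3_op, eta0_op, comm_op h0 h0 h0 h1 h0 h1 h0 h0 h0 h0 hφ]
    simp (disch := fun_prop) only [pd_neg, pd_mul, pd_add, pd_sub, pd_const, pd_coord,
      pd_cos, pd_sin, Fin.reduceEq, reduceIte]
    try ring
  · show xiop μ₁ μ₂ μ₃ μ₄ ε 3 (etaop μ₁ μ₂ μ₃ μ₄ ε 1 φ) x
        - etaop μ₁ μ₂ μ₃ μ₄ ε 1 (xiop μ₁ μ₂ μ₃ μ₄ ε 3 φ) x = 0
    rw [xi3_op, eta1_op, comm_op h0 h0 h0 h1 h0 h0 h1 h0 h0 he1d hφ]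
    simp (disch := fun_prop) only [pd_neg, pd_mul, pd_add, pd_sub, pd_const, pd_coord,
      pd_cos, pd_sin, Fin.reduceEq, reduceIte]
    try ring
  · show xiop μ₁ μ₂ μ₃ μ₄ ε 3 (etaop μ₁ μ₂ μ₃ μ₄ ε 2 φ) x
        - etaop μ₁ μ₂ μ₃ μ₄ ε 2 (xiop μ₁ μ₂ μ₃ μ₄ ε 3 φ) x = 0
    rw [xi3_op, eta2_op, comm_op h0 h0 h0 h1 h0 hy1 hny0 h1 h0 he2d hφ]
    simp (disch := fun_prop) only [pd_neg, pd_mul, pd_add, pd_sub, pd_const, pd_coord,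
      pd_cos, pd_sin, Fin.reduceEq, reduceIte]
    try ring
  · show xiop μ₁ μ₂ μ₃ μ₄ ε 3 (etaop μ₁ μ₂ μ₃ μ₄ ε 3 φ) x
        - etaop μ₁ μ₂ μ₃ μ₄ ε 3 (xiop μ₁ μ₂ μ₃ μ₄ ε 3 φ) x = 0
    rw [xi3_op, eta3_op, comm_op h0 h0 h0 h1 h0 h0 h0 h0 h1 he3d hφ]
    simp (disch := fun_prop) only [pd_neg, pd_mul, pd_add, pd_sub, pd_const, pd_coord,
      pd_cos, pd_sin, Fin.reduceEq, reduceIte]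
    try ring
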